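/- arXiv:2001.10121 — 7 statements merged into one kernel-verified Lean document; each statement's English description precedes it below -/
import Mathlib

section
/- Let a, b ∈ ℝ with a ≤ -1 and b < 0. Then for every y ≥ 0 there exists a unique x ∈ [0,∞) such that |1 + a·exp(-x/b)|·x = y. -/
open Real

theorem stmt_4 (a b : ℝ) (ha : a ≤ -1) (hb : b < 0) (y : ℝ) (hy : 0 ≤ y) :
    ∃! x : ℝ, 0 ≤ x ∧ |1 + a * Real.exp (-x / b)| * x = y := by
  set f : ℝ → ℝ := fun x => |1 + a * Real.exp (-x / b)| * x with hf
  have hb' : 0 < -b := by linarith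
  have hdiv : ∀ x : ℝ, 0 ≤ x → 0 ≤ -x / b := by
    intro x hx
    exact div_nonneg_iff.2 (Or.inr ⟨by linarith, hb.le⟩)
  have habs : ∀ x : ℝ, 0 ≤ x → |1 + a * Real.exp (-x / b)| = -(1 + a * Real.exp (-x / b)) := by
    intro x hx
    have hE : 1 ≤ Real.exp (-x / b) := by
      rw [show (1:ℝ) = Real.exp 0 by simp]
      exact Real.exp_le_exp.2 (hdiv x hx)
    have : a * Real.exp (-x / b) ≤ -1 := by nlinarith
    rw [abs_of_nonpos (by linarith)]
  -- strict monotonicity on [0,∞)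
  have hmono : StrictMonoOn f (Set.Ici 0) := by
    intro x1 hx1 x2 hx2 hlt
    simp only [Set.mem_Ici] at hx1 hx2
    have hE1 : 1 ≤ Real.exp (-x1 / b) := by
      rw [show (1:ℝ) = Real.exp 0 by simp]; exact Real.exp_le_exp.2 (hdiv x1 hx1)
    have hE12 : Real.exp (-x1 / b) < Real.exp (-x2 / b) := by
      apply Real.exp_lt_exp.2
      have h1 : -x1 / b - (-x2 / b) = (x2 - x1) / b := by ring
      have h2 : (x2 - x1) / b < 0 := div_neg_of_pos_of_neg (by linarith) hb
      linarith
    simp only [hf, habs x1 hx1, habs x2 hx2]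
    have hpos : 0 < -(1 + a * Real.exp (-x2 / b)) := by nlinarith
    nlinarith [mul_pos hpos (sub_pos.2 hlt),
      mul_nonneg (mul_nonneg (sub_nonneg.2 hE12.le) (by linarith : (0:ℝ) ≤ -a)) hx1]
  -- continuity
  have hcont : Continuous f := by
    apply Continuous.mul _ continuous_id
    apply Continuous.abs
    continuity
  -- choose M with f M ≥ y
  set M : ℝ := Real.sqrt (y * (-b)) with hM
  have hM0 : 0 ≤ M := Real.sqrt_nonneg _
  have hMsq : M * M = y * (-b) := Real.mul_self_sqrt (by positivity)
  have hfM : y ≤ f M := by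
    have hE := Real.add_one_le_exp (-M / b)
    simp only [hf, habs M hM0]
    have h1 : (-M / b) * M ≤ -(1 + a * Real.exp (-M / b)) * M := by
      have : -M / b ≤ -(1 + a * Real.exp (-M / b)) := by nlinarith [Real.exp_pos (-M / b)]
      exact mul_le_mul_of_nonneg_right this hM0
    have h2 : (-M / b) * M = y := by
      have hbne : b ≠ 0 := hb.ne
      field_simp
      linarith [hMsq]
    linarith
  have hf0 : f 0 = 0 := by simp [hf]
  obtain ⟨x, hxmem, hxeq⟩ := intermediate_value_Icc hM0 hcont.continuousOn
    (show y ∈ Set.Icc (f 0) (f M) from ⟨by rw [hf0]; exact hy, hfM⟩)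
  refine ⟨x, ⟨hxmem.1, hxeq⟩, ?_⟩
  rintro x' ⟨hx', hx'eq⟩
  have hfx' : f x' = f x := by rw [hxeq]; exact hx'eq
  exact hmono.injOn (Set.mem_Ici.2 hx') (Set.mem_Ici.2 hxmem.1) hfx'
end

section
/- Let a, b ∈ ℝ with -1 ≤ a < 0 and b > 0. Then for every y ≥ 0 there exists a unique x ∈ [0,∞) such that |1 + a·exp(-x/b)|·x = y. -/
/-!
For `x ≥ 0` the factor `1 + a e^{-x/b}` is nonnegative, so the equation reads `g x = y` with
`g x = (1 + a e^{-x/b}) x`. Writing `t = x / b`, one has `g' x = 1 + a e^{-t} (1 - t)`, which is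
positive because `0 ≤ (1 - t) e^{-t} < 1` for `0 < t ≤ 1` and `(1 - t) e^{-t} < 0` for `t > 1`;
so `g` is strictly increasing on `[0, ∞)`. Since `t e^{-t} ≤ 1`, also `g x ≥ x - b`, and the
intermediate value theorem on `[0, y + b]` provides the solution.
-/

open Real

lemma one_add_mul_exp_neg_nonneg {a t : ℝ} (ha : -1 ≤ a) (ht : 0 ≤ t) :
    0 ≤ 1 + a * exp (-t) := by
  have hexp : exp (-t) ≤ 1 := exp_le_one_iff.mpr (by linarith)
  nlinarith [exp_pos (-t)]

lemma one_add_mul_exp_neg_mul_one_sub_pos {a t : ℝ} (ha₁ : -1 ≤ a) (ha₂ : a ≤ 0) (ht : 0 < t) :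
    0 < 1 + a * exp (-t) * (1 - t) := by
  have hexp_pos : 0 < exp (-t) := exp_pos _
  have hexp_lt : exp (-t) < 1 := exp_lt_one_iff.mpr (by linarith)
  rcases le_or_gt t 1 with ht1 | ht1
  · have hprod : exp (-t) * (1 - t) < 1 := by nlinarith
    nlinarith [mul_nonneg hexp_pos.le (sub_nonneg.mpr ht1)]
  · nlinarith [mul_pos hexp_pos (sub_pos.mpr ht1)]

lemma mul_exp_neg_div_le {x b : ℝ} (hb : 0 < b) : x * exp (-x / b) ≤ b := by
  have hle : x / b ≤ exp (x / b) := by linarith [add_one_le_exp (x / b)]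
  rw [neg_div, exp_neg, ← div_eq_mul_inv, div_le_iff₀ (exp_pos _)]
  calc x = b * (x / b) := by field_simp
    _ ≤ b * exp (x / b) := mul_le_mul_of_nonneg_left hle hb.le

section

variable (a b : ℝ)

lemma hasDerivAt_one_add_mul_exp_neg_div_mul (x : ℝ) :
    HasDerivAt (fun x => (1 + a * exp (-x / b)) * x) (1 + a * exp (-x / b) * (1 - x / b)) x := by
  have hinner : HasDerivAt (fun x : ℝ => -x / b) (-1 / b) x := by
    simpa using (hasDerivAt_id x).neg.div_const b
  exact (((hinner.exp.const_mul a).const_add 1).mul (hasDerivAt_id' x)).congr_deriv (by ring)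

lemma continuous_one_add_mul_exp_neg_div_mul :
    Continuous (fun x => (1 + a * exp (-x / b)) * x) := by
  fun_prop

variable {a b}

lemma strictMonoOn_one_add_mul_exp_neg_div_mul (ha₁ : -1 ≤ a) (ha₂ : a ≤ 0) (hb : 0 < b) :
    StrictMonoOn (fun x => (1 + a * exp (-x / b)) * x) (Set.Ici 0) := by
  refine strictMonoOn_of_deriv_pos (convex_Ici 0)
    (continuous_one_add_mul_exp_neg_div_mul a b).continuousOn fun x hx => ?_
  rw [interior_Ici] at hx
  rw [(hasDerivAt_one_add_mul_exp_neg_div_mul a b x).deriv, neg_div]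
  exact one_add_mul_exp_neg_mul_one_sub_pos ha₁ ha₂ (div_pos hx hb)

lemma sub_le_one_add_mul_exp_neg_div_mul (ha : -1 ≤ a) (hb : 0 < b) {x : ℝ} (hx : 0 ≤ x) :
    x - b ≤ (1 + a * exp (-x / b)) * x := by
  have hxe := mul_exp_neg_div_le (x := x) hb
  nlinarith [mul_nonneg hx (exp_pos (-x / b)).le]

end

theorem stmt_6 (a b : ℝ) (ha1 : -1 ≤ a) (ha2 : a < 0) (hb : 0 < b) (y : ℝ) (hy : 0 ≤ y) :
    ∃! x : ℝ, 0 ≤ x ∧ |1 + a * Real.exp (-x / b)| * x = y := by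
  set g : ℝ → ℝ := fun x => (1 + a * exp (-x / b)) * x with hg
  have habs : ∀ x, 0 ≤ x → |1 + a * exp (-x / b)| * x = g x := fun x hx => by
    rw [abs_of_nonneg (by simpa [neg_div] using one_add_mul_exp_neg_nonneg ha1 (div_nonneg hx hb.le))]
  have hyb : 0 ≤ y + b := by linarith
  have hy_mem : y ∈ Set.Icc (g 0) (g (y + b)) :=
    ⟨by simpa [hg] using hy, by linarith [sub_le_one_add_mul_exp_neg_div_mul ha1 hb hyb]⟩
  obtain ⟨x, hx_mem, hgx⟩ := intermediate_value_Icc hyb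
    (continuous_one_add_mul_exp_neg_div_mul a b).continuousOn hy_mem
  refine ⟨x, ⟨hx_mem.1, (habs x hx_mem.1).trans hgx⟩, fun z ⟨hz, hgz⟩ => ?_⟩
  exact (strictMonoOn_one_add_mul_exp_neg_div_mul ha1 ha2.le hb).injOn hz hx_mem.1
    (((habs z hz).symm.trans hgz).trans hgx.symm)
end

section
/- Let a, b ∈ ℝ with 0 ≤ a ≤ e² and b > 0. Then for every y ≥ 0 there exists a unique x ∈ [0,∞) such that (1 + a·exp(-x/b))·x = y. -/
/-!
After the substitution `x = b t` the map is `x ↦ b g(x / b)` with `g t = (1 + a e⁻ᵗ) t`, and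
`g' t = 1 - a (t - 1) e⁻ᵗ`. Since `(t - 1) e⁻ᵗ` attains its maximum `e⁻²` only at `t = 2`,
the bound `a ≤ e²` makes `g'` positive away from `t = 2`, so `g` is strictly increasing on all
of `ℝ`.
The map is `0` at `0` and at least `y` at `y`, so the intermediate value theorem gives a solution
in `[0, y]`.
-/

open Real Set

lemma sub_one_mul_exp_neg_lt_exp_neg_two {t : ℝ} (ht : t ≠ 2) :
    (t - 1) * exp (-t) < exp (-2) := by
  have h : t - 2 + 1 < exp (t - 2) := add_one_lt_exp (sub_ne_zero.mpr ht)
  calc (t - 1) * exp (-t) < exp (t - 2) * exp (-t) := by gcongr; linarith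
    _ = exp (-2) := by rw [← exp_add]; ring_nf

lemma hasDerivAt_one_add_mul_exp_neg_mul_self (a t : ℝ) :
    HasDerivAt (fun s => (1 + a * exp (-s)) * s) (1 - a * (t - 1) * exp (-t)) t := by
  refine ((((hasDerivAt_neg t).exp.const_mul a).const_add 1).mul (hasDerivAt_id t)).congr_deriv ?_
  simp only [id]
  ring

lemma one_sub_mul_sub_one_mul_exp_neg_pos {a t : ℝ} (ha₀ : 0 ≤ a) (ha : a ≤ exp 2)
    (ht : t ≠ 2) :
    0 < 1 - a * (t - 1) * exp (-t) := by
  rcases ha₀.eq_or_lt with rfl | ha₀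
  · norm_num
  have hlt := mul_lt_mul_of_pos_left (sub_one_mul_exp_neg_lt_exp_neg_two ht) ha₀
  have : a * exp (-2) ≤ 1 :=
    calc a * exp (-2) ≤ exp 2 * exp (-2) := by gcongr
      _ = 1 := by rw [← exp_add]; norm_num
  linarith

lemma strictMono_one_add_mul_exp_neg_mul_self {a : ℝ} (ha₀ : 0 ≤ a) (ha : a ≤ exp 2) :
    StrictMono fun t => (1 + a * exp (-t)) * t := by
  have hpiece {D : Set ℝ} (hD : Convex ℝ D) (h2 : ∀ t ∈ interior D, t ≠ 2) :
      StrictMonoOn (fun t => (1 + a * exp (-t)) * t) D :=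
    strictMonoOn_of_hasDerivWithinAt_pos hD (by fun_prop)
      (fun t _ => (hasDerivAt_one_add_mul_exp_neg_mul_self a t).hasDerivWithinAt)
      fun t ht => one_sub_mul_sub_one_mul_exp_neg_pos ha₀ ha (h2 t ht)
  refine StrictMonoOn.Iic_union_Ici (a := 2) (hpiece (convex_Iic 2) ?_) (hpiece (convex_Ici 2) ?_)
  · simp only [interior_Iic, mem_Iio]
    exact fun t ht => ht.ne
  · simp only [interior_Ici, mem_Ioi]
    exact fun t ht => ht.ne'

theorem stmt_8 (a b : ℝ) (ha1 : 0 ≤ a) (ha2 : a ≤ Real.exp 1 ^ 2) (hb : 0 < b)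
    (y : ℝ) (hy : 0 ≤ y) :
    ∃! x : ℝ, 0 ≤ x ∧ (1 + a * Real.exp (-x / b)) * x = y := by
  set f : ℝ → ℝ := fun x => (1 + a * exp (-x / b)) * x
  have hf : f = fun x => b * ((1 + a * exp (-(x / b))) * (x / b)) := by
    ext x
    simp only [f, neg_div]
    field_simp
  have hmono : StrictMono f := by
    rw [hf]
    exact ((strictMono_one_add_mul_exp_neg_mul_self ha1 (by simpa using ha2)).comp
      (strictMono_id.div_const hb)).const_mul hb
  have hf0 : f 0 = 0 := by simp [f]
  have hfy : y ≤ f y :=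
    le_mul_of_one_le_left hy (by simp only [le_add_iff_nonneg_right]; positivity)
  obtain ⟨x, hx, hfx⟩ :=
    intermediate_value_Icc hy (by fun_prop : Continuous f).continuousOn ⟨hf0.symm ▸ hy, hfy⟩
  exact ⟨x, ⟨hx.1, hfx⟩, fun z ⟨_, hfz⟩ => hmono.injective (hfz.trans hfx.symm)⟩
end

section
/- Let a, b ∈ ℝ with -1 < a < 0 and b < 0. Then the function f(x) = |1 + a·exp(-x/b)|·x is strictly increasing on (b·ln|a|, ∞); more precisely, for all x > b·ln|a| one has f(x) = -(1 + a·exp(-x/b))·x and f'(x) = -a·(1 - x/b)·exp(-x/b) - 1 > -ln|a| > 0. -/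
/-!
Beyond the threshold `b log |a|` the term `-a exp (-x / b) = exp (log |a| - x / b)` exceeds `1`,
so `1 + a exp (-x / b) < 0` and the absolute value is a sign flip. The derivative is then
`(1 - x / b) · (-a exp (-x / b)) - 1 > (1 - x / b) - 1 > -log |a|`, using `x / b < log |a|`.
-/

open Real

theorem HasDerivAt.abs_mul_id_of_neg {g : ℝ → ℝ} {g' x : ℝ} (hg : HasDerivAt g g' x)
    (hx : g x < 0) : HasDerivAt (fun y => |g y| * y) (-(g' * x + g x)) x := by
  have hneg : ∀ᶠ y in nhds x, g y < 0 := hg.continuousAt.eventually_lt continuousAt_const hx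
  refine ((hg.mul (hasDerivAt_id x)).neg.congr_of_eventuallyEq ?_).congr_deriv (by simp)
  filter_upwards [hneg] with y hy
  rw [abs_of_neg hy]
  simp

theorem hasDerivAt_one_add_mul_exp_neg_div (a b x : ℝ) :
    HasDerivAt (fun y => 1 + a * exp (-y / b)) (a * (exp (-x / b) * (-1 / b))) x :=
  ((((hasDerivAt_id x).neg.div_const b).exp).const_mul a).const_add 1

section

variable {a b x : ℝ}

theorem neg_log_abs_pos (ha1 : -1 < a) (ha2 : a < 0) : 0 < -log |a| :=
  neg_pos.2 <| log_neg (abs_pos.2 ha2.ne) (by rw [abs_of_neg ha2]; linarith)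

theorem div_lt_log_abs (hb : b < 0) (hx : b * log |a| < x) : x / b < log |a| :=
  (div_lt_iff_of_neg hb).2 (by linarith)

theorem one_lt_neg_mul_exp_neg_div (ha : a < 0) (hb : b < 0) (hx : b * log |a| < x) :
    1 < -a * exp (-x / b) := by
  have hexp : -a * exp (-x / b) = exp (log |a| - x / b) := by
    rw [exp_sub, exp_log (abs_pos.2 ha.ne), abs_of_neg ha, neg_div, exp_neg]
    exact (div_eq_mul_inv _ _).symm
  rw [hexp, one_lt_exp_iff]
  linarith [div_lt_log_abs hb hx]

theorem neg_log_abs_lt_deriv (ha1 : -1 < a) (ha2 : a < 0) (hb : b < 0) (hx : b * log |a| < x) :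
    -log |a| < -a * (1 - x / b) * exp (-x / b) - 1 := by
  have hE := one_lt_neg_mul_exp_neg_div ha2 hb hx
  have hslope : 1 - log |a| < 1 - x / b := by linarith [div_lt_log_abs hb hx]
  have hL := neg_log_abs_pos ha1 ha2
  nlinarith

end

theorem stmt_11 (a b : ℝ) (ha1 : -1 < a) (ha2 : a < 0) (hb : b < 0) :
    StrictMonoOn (fun x : ℝ => |1 + a * Real.exp (-x / b)| * x)
      (Set.Ioi (b * Real.log |a|)) ∧
    ∀ x : ℝ, b * Real.log |a| < x →
      |1 + a * Real.exp (-x / b)| * x = -((1 + a * Real.exp (-x / b)) * x) ∧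
      HasDerivAt (fun x : ℝ => |1 + a * Real.exp (-x / b)| * x)
        (-a * (1 - x / b) * Real.exp (-x / b) - 1) x ∧
      -Real.log |a| < -a * (1 - x / b) * Real.exp (-x / b) - 1 ∧
      0 < -Real.log |a| := by
  have hsign : ∀ x, b * log |a| < x → 1 + a * exp (-x / b) < 0 := fun x hx => by
    linarith [one_lt_neg_mul_exp_neg_div ha2 hb hx]
  have hderiv : ∀ x, b * log |a| < x → HasDerivAt (fun x : ℝ => |1 + a * exp (-x / b)| * x)
      (-a * (1 - x / b) * exp (-x / b) - 1) x := fun x hx => by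
    convert (hasDerivAt_one_add_mul_exp_neg_div a b x).abs_mul_id_of_neg (hsign x hx) using 1
    field_simp
    ring
  have hpos : ∀ x ∈ Set.Ioi (b * log |a|), 0 < -a * (1 - x / b) * exp (-x / b) - 1 :=
    fun x hx => (neg_log_abs_pos ha1 ha2).trans (neg_log_abs_lt_deriv ha1 ha2 hb hx)
  refine ⟨?_, fun x hx => ⟨?_, hderiv x hx, neg_log_abs_lt_deriv ha1 ha2 hb hx,
    neg_log_abs_pos ha1 ha2⟩⟩
  · refine strictMonoOn_of_hasDerivWithinAt_pos
      (f' := fun x => -a * (1 - x / b) * exp (-x / b) - 1) (convex_Ioi _)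
      (fun x hx => (hderiv x hx).continuousAt.continuousWithinAt) ?_ ?_ <;>
      rw [interior_Ioi]
    exacts [fun x hx => (hderiv x hx).hasDerivWithinAt, hpos]
  · rw [abs_of_neg (hsign x hx), neg_mul]
end

section
/- Let a, b ∈ ℝ with -1 < a < 0 and b < 0, and set M := (1 + a·exp(W₀(-e/a) - 1))·b·(1 - W₀(-e/a)). If y > M, then the equation |1 + a·exp(-x/b)|·x = y has a unique solution x ∈ [0,∞), and it satisfies x > b·ln|a|. -/
open Real Set Filter

/-! Write `L = b·log|a| > 0`. The factor `1 + a·exp(-x/b)` is nonnegative on `[0, L]` and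
nonpositive on `[L, ∞)`. Since `z₀·e^{z₀} = -e/a` means `a·z₀·e^{z₀-1} = -1`, substituting
`-x/b = (z₀ - 1) + v` turns `(1 + a·exp(-x/b))·x ≤ M` into `(w + v)(w + 1 - eᵛ) ≤ w²` with
`w = z₀ - 1`, which follows from `eᵛ ≥ 1 + v`; so no solution lies in `[0, L]`. On `[L, ∞)` the
function is the product of the increasing nonnegative factors `-(1 + a·exp(-x/b))` and `x`,
hence strictly increasing, and it tends to infinity, so it takes the value `y > M ≥ 0` once. -/

lemma add_mul_add_one_sub_exp_le_sq {w v : ℝ} (hv : -w ≤ v) :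
    (w + v) * (w + 1 - exp v) ≤ w ^ 2 := by
  rcases le_or_gt (exp v) (w + 1) with h | h
  · -- `exp v ≥ v + 1` reduces this to `(w + v) * (w - v) ≤ w ^ 2`
    nlinarith [mul_nonneg (neg_le_iff_add_nonneg.1 hv) (sub_nonneg.2 (add_one_le_exp v)),
      sq_nonneg v]
  · nlinarith [mul_nonneg (neg_le_iff_add_nonneg.1 hv) (sub_pos.2 h).le]

section

variable {a b x z : ℝ}

lemma one_add_mul_exp_eq_one_sub_exp (ha : a < 0) (t : ℝ) :
    1 + a * exp t = 1 - exp (log |a| + t) := by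
  rw [exp_add, exp_log (abs_pos.2 ha.ne), abs_of_neg ha]
  ring

lemma one_add_mul_exp_nonneg_iff (ha : a < 0) (hb : b < 0) :
    0 ≤ 1 + a * exp (-x / b) ↔ x ≤ b * log |a| := by
  rw [one_add_mul_exp_eq_one_sub_exp ha, sub_nonneg, exp_le_one_iff, neg_div,
    ← sub_eq_add_neg, sub_nonpos, le_div_iff_of_neg hb, mul_comm]

lemma one_add_mul_exp_nonpos_iff (ha : a < 0) (hb : b < 0) :
    1 + a * exp (-x / b) ≤ 0 ↔ b * log |a| ≤ x := by
  rw [one_add_mul_exp_eq_one_sub_exp ha, sub_nonpos, one_le_exp_iff, neg_div,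
    ← sub_eq_add_neg, sub_nonneg, div_le_iff_of_neg hb, mul_comm]

lemma one_add_mul_exp_mul_le (ha : a < 0) (hb : b < 0) (hz : z * exp z = -exp 1 / a)
    (hx : 0 ≤ x) : (1 + a * exp (-x / b)) * x ≤ (1 + a * exp (z - 1)) * (b * (1 - z)) := by
  have ha0 : a ≠ 0 := ha.ne
  have hb0 : b ≠ 0 := hb.ne
  have hz0 : 0 < z := pos_of_mul_pos_left (hz ▸ div_pos_of_neg_of_neg (by simp [exp_pos]) ha)
    (exp_pos z).le
  have hkey : a * z * exp (z - 1) = -1 := by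
    rw [exp_sub, mul_div_assoc', mul_assoc, hz]
    field_simp
  set v := -x / b - (z - 1)
  have hxv : x = -b * (z - 1 + v) := by
    simp only [v]; field_simp; ring
  have hv : -(z - 1) ≤ v := by
    have : 0 ≤ -x / b := div_nonneg_of_nonpos (neg_nonpos.2 hx) hb.le
    linarith
  have hexp : exp (-x / b) = exp (z - 1) * exp v := by
    rw [← exp_add]; congr 1; ring
  refine le_of_mul_le_mul_left ?_ hz0
  calc z * ((1 + a * exp (-x / b)) * x) = -b * ((z - 1 + v) * (z - 1 + 1 - exp v)) := by
        rw [hexp, hxv]; linear_combination (-b * (z - 1 + v) * exp v) * hkey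
    _ ≤ -b * (z - 1) ^ 2 :=
        mul_le_mul_of_nonneg_left (add_mul_add_one_sub_exp_le_sq hv) (by linarith)
    _ = z * ((1 + a * exp (z - 1)) * (b * (1 - z))) := by
        linear_combination (-(b * (1 - z))) * hkey

lemma strictMonoOn_abs_one_add_mul_exp_mul (ha1 : -1 ≤ a) (ha2 : a < 0) (hb : b < 0) :
    StrictMonoOn (fun x => |1 + a * exp (-x / b)| * x) (Ici (b * log |a|)) := by
  intro x₁ hx₁ x₂ hx₂ hlt
  have hL : 0 ≤ b * log |a| := mul_nonneg_of_nonpos_of_nonpos hb.le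
    (log_nonpos (abs_nonneg a) (by rw [abs_of_neg ha2]; linarith))
  have hexp : exp (-x₁ / b) < exp (-x₂ / b) :=
    exp_lt_exp.2 (div_lt_div_of_neg_of_lt hb (neg_lt_neg hlt))
  dsimp only
  rw [abs_of_nonpos ((one_add_mul_exp_nonpos_iff ha2 hb).2 hx₁),
    abs_of_nonpos ((one_add_mul_exp_nonpos_iff ha2 hb).2 hx₂)]
  exact mul_lt_mul_of_lt_of_le_of_nonneg_of_pos
    (neg_lt_neg (add_lt_add_right (mul_lt_mul_of_neg_left hexp ha2) 1)) hlt.le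
    (neg_nonneg.2 ((one_add_mul_exp_nonpos_iff ha2 hb).2 hx₁)) (hL.trans_lt (hx₁.trans_lt hlt))

lemma tendsto_abs_one_add_mul_exp_mul_atTop (ha : a < 0) (hb : b < 0) :
    Tendsto (fun x => |1 + a * exp (-x / b)| * x) atTop atTop := by
  have hexp : Tendsto (fun x => exp (-x / b)) atTop atTop := by
    refine tendsto_exp_atTop.comp ((tendsto_id.atTop_div_const (neg_pos.2 hb)).congr fun x => ?_)
    rw [id, div_neg, neg_div]
  have hbot : Tendsto (fun x => 1 + a * exp (-x / b)) atTop atBot :=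
    tendsto_atBot_add_const_left _ 1 (hexp.const_mul_atTop_of_neg ha)
  refine tendsto_atTop_mono' atTop ?_ tendsto_id
  filter_upwards [hbot.eventually_le_atBot (-1), eventually_ge_atTop 0] with x hx hx0
  exact le_mul_of_one_le_left hx0 (le_abs.2 (Or.inr (by linarith)))

end

theorem stmt_15 (a b : ℝ) (ha1 : -1 < a) (ha2 : a < 0) (hb : b < 0)
    (z0 : ℝ) (hz0 : -1 ≤ z0 ∧ z0 * Real.exp z0 = -(Real.exp 1) / a)
    (M : ℝ) (hM : M = (1 + a * Real.exp (z0 - 1)) * (b * (1 - z0)))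
    (y : ℝ) (hy : M < y) :
    (∃! x : ℝ, 0 ≤ x ∧ |1 + a * Real.exp (-x / b)| * x = y) ∧
    ∀ x : ℝ, 0 ≤ x → |1 + a * Real.exp (-x / b)| * x = y → b * Real.log |a| < x := by
  set L := b * log |a|
  have hL : 0 < L := mul_pos_of_neg_of_neg hb
    (log_neg (abs_pos.2 ha2.ne) (by rw [abs_of_neg ha2]; linarith))
  have hbound : ∀ x, 0 ≤ x → x ≤ L → |1 + a * exp (-x / b)| * x < y := fun x hx hxL => by
    rw [abs_of_nonneg ((one_add_mul_exp_nonneg_iff ha2 hb).2 hxL)]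
    exact (one_add_mul_exp_mul_le ha2 hb hz0.2 hx).trans_lt (hM ▸ hy)
  have hsol : ∀ x, 0 ≤ x → |1 + a * exp (-x / b)| * x = y → L < x := fun x hx hfx =>
    lt_of_not_ge fun hxL => (hbound x hx hxL).ne hfx
  obtain ⟨x, hxL, hfx⟩ := intermediate_value_Ici (by fun_prop)
    (tendsto_abs_one_add_mul_exp_mul_atTop ha2 hb) (hbound L hL.le le_rfl).le
  refine ⟨⟨x, ⟨hL.le.trans hxL, hfx⟩, fun x' ⟨hx', hfx'⟩ => ?_⟩, hsol⟩
  exact strictMonoOn_abs_one_add_mul_exp_mul ha1.le ha2 hb |>.injOn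
    (hsol x' hx' hfx').le hxL (hfx'.trans hfx.symm)
end

section
/- Let E be a nonzero real normed space, a, b ∈ ℝ with b ≠ 0, and suppose either (-1 < a < 0 and b < 0) or (a < -1 and b > 0). Then the set of solutions X ∈ E of (1 + a·exp(-‖X‖/b)) • X = 0 is exactly {0} ∪ {X ∈ E : ‖X‖ = b·ln|a|}; in particular, if X̃ ∈ E with ‖X̃‖ = 1, then 0, b·ln|a|·X̃ and -b·ln|a|·X̃ are three distinct solutions. -/
open Real

/-
Since `(1 + a e^{-‖X‖/b}) • X = 0` forces `X = 0` or `1 + a e^{-‖X‖/b} = 0`, everything reduces to the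
scalar equation `1 + a e^{-t/b} = 0`, which for `a < 0` has the unique solution `t = b log |a|`.
The sign conditions on `a` and `b` make this radius positive, so `±(b log |a|) X̃` are nonzero and
distinct points of the solution sphere.
-/

theorem one_add_mul_exp_neg_div_eq_zero_iff {a b : ℝ} (ha : a < 0) (hb : b ≠ 0) (t : ℝ) :
    1 + a * exp (-t / b) = 0 ↔ t = b * log |a| := by
  have habs : 0 < |a| := abs_pos.mpr ha.ne
  calc 1 + a * exp (-t / b) = 0 ↔ exp (-t / b) = exp (-log |a|) := by
        rw [exp_neg, exp_log habs, abs_of_neg ha]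
        constructor <;> intro h
        · exact eq_inv_of_mul_eq_one_left (by linear_combination -h)
        · rw [h, inv_neg, mul_neg, mul_inv_cancel₀ ha.ne]; ring
    _ ↔ -t / b = -log |a| := exp_eq_exp
    _ ↔ t = b * log |a| := by
        constructor <;> intro h
        · field_simp at h; linarith
        · rw [h]; field_simp

theorem mul_log_abs_pos {a b : ℝ} (h : (-1 < a ∧ a < 0 ∧ b < 0) ∨ (a < -1 ∧ 0 < b)) :
    0 < b * log |a| := by
  rcases h with ⟨ha₁, ha₀, hb⟩ | ⟨ha, hb⟩
  · exact mul_pos_of_neg_of_neg hb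
      (log_neg (abs_pos.mpr ha₀.ne) (by rw [abs_of_neg ha₀]; linarith))
  · exact mul_pos hb (log_pos (by rw [abs_of_neg (by linarith : a < 0)]; linarith))

theorem setOf_smul_self_eq_zero {E : Type*} [NormedAddCommGroup E] [NormedSpace ℝ E]
    (c : ℝ → ℝ) : {X : E | c ‖X‖ • X = 0} = {0} ∪ {X : E | c ‖X‖ = 0} := by
  ext X
  simp [smul_eq_zero, or_comm]

theorem norm_smul_of_norm_eq_one {E : Type*} [NormedAddCommGroup E] [NormedSpace ℝ E]
    {x : E} (hx : ‖x‖ = 1) (r : ℝ) : ‖r • x‖ = |r| := by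
  rw [norm_smul, hx, norm_eq_abs, mul_one]

theorem stmt_17_general {E : Type*} [NormedAddCommGroup E] [NormedSpace ℝ E]
    (a b : ℝ)
    (h : (-1 < a ∧ a < 0 ∧ b < 0) ∨ (a < -1 ∧ 0 < b)) :
    {X : E | (1 + a * Real.exp (-‖X‖ / b)) • X = 0} =
      {0} ∪ {X : E | ‖X‖ = b * Real.log |a|} ∧
    ∀ Xt : E, ‖Xt‖ = 1 →
      ((1 + a * Real.exp (-‖(0 : E)‖ / b)) • (0 : E) = 0 ∧
       (1 + a * Real.exp (-‖(b * Real.log |a|) • Xt‖ / b)) • ((b * Real.log |a|) • Xt) = 0 ∧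
       (1 + a * Real.exp (-‖(-(b * Real.log |a|)) • Xt‖ / b)) • ((-(b * Real.log |a|)) • Xt) = 0) ∧
      (0 : E) ≠ (b * Real.log |a|) • Xt ∧
      (0 : E) ≠ (-(b * Real.log |a|)) • Xt ∧
      (b * Real.log |a|) • Xt ≠ (-(b * Real.log |a|)) • Xt := by
  have ha : a < 0 := by rcases h with ⟨-, ha, -⟩ | ⟨ha, -⟩ <;> linarith
  have hb : b ≠ 0 := by rcases h with ⟨-, -, hb⟩ | ⟨-, hb⟩ <;> [exact hb.ne; exact hb.ne']
  refine ⟨?_, fun Xt hXt => ?_⟩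
  · refine (setOf_smul_self_eq_zero fun t => 1 + a * exp (-t / b)).trans ?_
    simp only [one_add_mul_exp_neg_div_eq_zero_iff ha hb]
  have hL := mul_log_abs_pos h
  set L := b * log |a|
  have hroot := (one_add_mul_exp_neg_div_eq_zero_iff ha hb L).mpr rfl
  have hXt₀ : Xt ≠ 0 := norm_ne_zero_iff.mp (by rw [hXt]; exact one_ne_zero)
  refine ⟨⟨smul_zero _, ?_, ?_⟩, (smul_ne_zero hL.ne' hXt₀).symm,
    (smul_ne_zero (neg_ne_zero.mpr hL.ne') hXt₀).symm,
    fun hEq => by linarith [smul_left_injective ℝ hXt₀ hEq]⟩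
  · rw [norm_smul_of_norm_eq_one hXt, abs_of_pos hL, hroot, zero_smul]
  · rw [norm_smul_of_norm_eq_one hXt, abs_neg, abs_of_pos hL, hroot, zero_smul]

theorem stmt_17 {E : Type*} [NormedAddCommGroup E] [NormedSpace ℝ E]
    (hE : ∃ v : E, v ≠ 0) (a b : ℝ) (hb : b ≠ 0)
    (h : (-1 < a ∧ a < 0 ∧ b < 0) ∨ (a < -1 ∧ 0 < b)) :
    {X : E | (1 + a * Real.exp (-‖X‖ / b)) • X = 0} =
      {0} ∪ {X : E | ‖X‖ = b * Real.log |a|} ∧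
    ∀ Xt : E, ‖Xt‖ = 1 →
      ((1 + a * Real.exp (-‖(0 : E)‖ / b)) • (0 : E) = 0 ∧
       (1 + a * Real.exp (-‖(b * Real.log |a|) • Xt‖ / b)) • ((b * Real.log |a|) • Xt) = 0 ∧
       (1 + a * Real.exp (-‖(-(b * Real.log |a|)) • Xt‖ / b)) • ((-(b * Real.log |a|)) • Xt) = 0) ∧
      (0 : E) ≠ (b * Real.log |a|) • Xt ∧
      (0 : E) ≠ (-(b * Real.log |a|)) • Xt ∧
      (b * Real.log |a|) • Xt ≠ (-(b * Real.log |a|)) • Xt :=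
  stmt_17_general a b h
end

section
/- Let E be a real normed space, a ≥ 0, b < 0, and Y ∈ E. Then there exists a unique X ∈ E with (1 + a·exp(-‖X‖/b)) • X = Y. -/
/-! The map `X ↦ φ ‖X‖ • X` is radial: it sends the sphere of radius `r` onto the sphere of
radius `φ r * r` by a positive rescaling. For `φ t = 1 + a * exp (-t / b)` with `a ≥ 0`, `b < 0`,
`φ` is continuous, positive and nondecreasing, so `t ↦ φ t * t` is a strictly increasing bijection
of `[0, ∞)`; hence `Y` has exactly one preimage, namely `(φ r)⁻¹ • Y` where `φ r * r = ‖Y‖`. -/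

open Real Set

section RadialRescaling

variable {φ : ℝ → ℝ}

lemma MonotoneOn.pos_of_pos_zero (hpos : 0 < φ 0) (hmono : MonotoneOn φ (Ici 0))
    {t : ℝ} (ht : 0 ≤ t) : 0 < φ t :=
  hpos.trans_le (hmono self_mem_Ici ht ht)

lemma MonotoneOn.strictMonoOn_mul_self (hpos : 0 < φ 0) (hmono : MonotoneOn φ (Ici 0)) :
    StrictMonoOn (fun t => φ t * t) (Ici 0) := by
  intro s hs t ht hst
  calc φ s * s ≤ φ t * s := mul_le_mul_of_nonneg_right (hmono hs ht hst.le) hs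
    _ < φ t * t := mul_lt_mul_of_pos_left hst (hmono.pos_of_pos_zero hpos ht)

lemma MonotoneOn.exists_mul_self_eq (hcont : ContinuousOn φ (Ici 0)) (hpos : 0 < φ 0)
    (hmono : MonotoneOn φ (Ici 0)) {y : ℝ} (hy : 0 ≤ y) : ∃ r, 0 ≤ r ∧ φ r * r = y := by
  set T := y / φ 0
  have hT : 0 ≤ T := div_nonneg hy hpos.le
  have hyT : y ≤ φ T * T :=
    calc y = φ 0 * T := (mul_div_cancel₀ y hpos.ne').symm
      _ ≤ φ T * T := mul_le_mul_of_nonneg_right (hmono self_mem_Ici hT hT) hT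
  have hcontT : ContinuousOn (fun t => φ t * t) (Icc 0 T) :=
    (hcont.mono Icc_subset_Ici_self).mul continuousOn_id
  obtain ⟨r, hr, hry⟩ := intermediate_value_Icc hT hcontT ⟨by simpa using hy, hyT⟩
  exact ⟨r, hr.1, hry⟩

theorem existsUnique_smul_norm_eq {E : Type*} [NormedAddCommGroup E] [NormedSpace ℝ E]
    (hcont : ContinuousOn φ (Ici 0)) (hpos : 0 < φ 0) (hmono : MonotoneOn φ (Ici 0)) (Y : E) :
    ∃! X : E, φ ‖X‖ • X = Y := by
  have hφ : ∀ X : E, 0 < φ ‖X‖ := fun X => hmono.pos_of_pos_zero hpos (norm_nonneg X)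
  have hnorm : ∀ X : E, ‖φ ‖X‖ • X‖ = φ ‖X‖ * ‖X‖ := fun X => by
    rw [norm_smul, Real.norm_of_nonneg (hφ X).le]
  obtain ⟨r, hr, hrY⟩ := hmono.exists_mul_self_eq hcont hpos (norm_nonneg Y)
  have hφr : 0 < φ r := hmono.pos_of_pos_zero hpos hr
  have hnormX : ‖(φ r)⁻¹ • Y‖ = r := by
    rw [norm_smul, Real.norm_of_nonneg (inv_nonneg.2 hφr.le), ← hrY, inv_mul_cancel_left₀ hφr.ne']
  refine ⟨(φ r)⁻¹ • Y, ?_, fun X hX => ?_⟩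
  · show φ ‖(φ r)⁻¹ • Y‖ • (φ r)⁻¹ • Y = Y
    rw [hnormX, smul_inv_smul₀ hφr.ne']
  · have hXr : ‖X‖ = r := (hmono.strictMonoOn_mul_self hpos).injOn (norm_nonneg X) hr
      (by rw [← hnorm, hX, hrY])
    rw [← hX, hXr, inv_smul_smul₀ hφr.ne']

end RadialRescaling

theorem stmt_18 {E : Type*} [NormedAddCommGroup E] [NormedSpace ℝ E]
    (a b : ℝ) (ha : 0 ≤ a) (hb : b < 0) (Y : E) :
    ∃! X : E, (1 + a * Real.exp (-‖X‖ / b)) • X = Y := by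
  have hcont : Continuous fun t : ℝ => 1 + a * exp (-t / b) := by fun_prop
  have hmono : Monotone fun t : ℝ => 1 + a * exp (-t / b) := fun s t hst => by
    have : -s / b ≤ -t / b := div_le_div_of_nonpos_of_le hb.le (neg_le_neg hst)
    dsimp only
    gcongr
  exact existsUnique_smul_norm_eq hcont.continuousOn (by positivity) (hmono.monotoneOn _) Y
end
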